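/- For every permutation w of {1,…,n}: raj(w) = max{ maj(v) : v ≤_R w } = max{ maj(u⁻¹) : u ≤_L w }, where the maxima are over permutations v below w in right weak order and u below w in left weak order, respectively. -/

import Mathlib

open scoped Classical

noncomputable section

namespace RajRegularity

variable {n : ℕ}

/-- Maximal length of an increasing subsequence of `w(i), …, w(n)` beginning with `w(i)`:
the largest cardinality of a set `s` of positions that contains `i`, consists of positions
`≥ i`, and on which `w` is strictly increasing. -/
def lisFrom (w : Equiv.Perm (Fin n)) (i : Fin n) : ℕ :=
  (Finset.univ.filter fun s : Finset (Fin n) =>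
      i ∈ s ∧ (∀ j ∈ s, i ≤ j) ∧ ∀ j ∈ s, ∀ k ∈ s, j < k → w j < w k).sup Finset.card

/-- `rajCode w i = (n − i + 1) −` (maximal length of an increasing subsequence of
`w(i), …, w(n)` beginning with `w(i)`); here positions are 0-based, so the number of
positions `≥ i` is `n - i`. -/
def rajCode (w : Equiv.Perm (Fin n)) (i : Fin n) : ℕ :=
  (n - (i : ℕ)) - lisFrom w i

/-- The Rajchgot index `raj w = Σᵢ rajCode w i`. -/
def raj (w : Equiv.Perm (Fin n)) : ℕ := ∑ i, rajCode w i

/-- The number of inversions of `w`: pairs of positions `i < j` with `w i > w j`. -/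
def invNum (w : Equiv.Perm (Fin n)) : ℕ :=
  (Finset.univ.filter fun p : Fin n × Fin n => p.1 < p.2 ∧ w p.2 < w p.1).card

/-- The `i`-th entry of the inv code: `ℓ_i(w) = #{ j : i < j, w j < w i }`. -/
def ellCode (w : Equiv.Perm (Fin n)) (i : Fin n) : ℕ :=
  (Finset.univ.filter fun j : Fin n => i < j ∧ w j < w i).card

/-- The set of descent positions of `w` (0-based position `j` with `w j > w (j+1)`). -/
def descents (w : Equiv.Perm (Fin n)) : Finset (Fin n) :=
  Finset.univ.filter fun j : Fin n =>
    if h : (j : ℕ) + 1 < n then w ⟨(j : ℕ) + 1, h⟩ < w j else False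

/-- The major index: the sum of the (1-based) descent positions of `w`. -/
def maj (w : Equiv.Perm (Fin n)) : ℕ := ∑ j ∈ descents w, ((j : ℕ) + 1)

/-- `mCode w i`: the number of descents of `w` at positions `≥ i`. -/
def mCode (w : Equiv.Perm (Fin n)) (i : Fin n) : ℕ :=
  ((descents w).filter fun j => i ≤ j).card

/-- `w` is dominant iff it avoids the pattern 132. -/
def Dominant (w : Equiv.Perm (Fin n)) : Prop :=
  ¬ ∃ i j k : Fin n, i < j ∧ j < k ∧ w i < w k ∧ w k < w j

/-- `w` is fireworks iff there are no positions `i < j` with `w j < w (j+1) < w i`. -/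
def Fireworks (w : Equiv.Perm (Fin n)) : Prop :=
  ¬ ∃ (i j : Fin n) (h : (j : ℕ) + 1 < n),
      i < j ∧ w j < w ⟨(j : ℕ) + 1, h⟩ ∧ w ⟨(j : ℕ) + 1, h⟩ < w i

/-- `w` is inverse fireworks iff `w⁻¹` is fireworks. -/
def InvFireworks (w : Equiv.Perm (Fin n)) : Prop := Fireworks w⁻¹

/-- `w` is a valley permutation: for some `a`, it is strictly decreasing on positions `≤ a`
and strictly increasing on positions `≥ a`. -/
def Valley (w : Equiv.Perm (Fin n)) : Prop :=
  ∃ a : ℕ, (∀ i j : Fin n, i < j → (j : ℕ) ≤ a → w j < w i) ∧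
    ∀ i j : Fin n, a ≤ (i : ℕ) → i < j → w i < w j

/-- `eps w i` is the (1-based) blob index `ε_i(w) = i + r_i(w)`. -/
def eps (w : Equiv.Perm (Fin n)) (i : Fin n) : ℕ := (i : ℕ) + 1 + rajCode w i

/-- The shape of `w`: `α_k(w) = #{ i : ε_i(w) = k }` (here `k : Fin n` stands for the
1-based index `k + 1`). -/
def shape (w : Equiv.Perm (Fin n)) : Fin n → ℕ := fun k =>
  (Finset.univ.filter fun i : Fin n => eps w i = (k : ℕ) + 1).card

/-- Dominance order on shapes: `α ⪰ β` iff every tail sum of `α` is at least the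
corresponding tail sum of `β`. -/
def Dominates (α β : Fin n → ℕ) : Prop :=
  ∀ m : Fin n,
    ∑ k ∈ Finset.univ.filter (fun k : Fin n => m ≤ k), β k ≤
      ∑ k ∈ Finset.univ.filter (fun k : Fin n => m ≤ k), α k

/-- Right weak order: `u ≤_R w` iff `w = u * v` length-additively. -/
def leR (u w : Equiv.Perm (Fin n)) : Prop :=
  ∃ v : Equiv.Perm (Fin n), w = u * v ∧ invNum w = invNum u + invNum v

/-- Left weak order: `u ≤_L w` iff `w = v * u` length-additively. -/
def leL (u w : Equiv.Perm (Fin n)) : Prop :=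
  ∃ v : Equiv.Perm (Fin n), w = v * u ∧ invNum w = invNum v + invNum u

/-- Two-sided weak order: the transitive closure of the union of left and right weak
orders (both are reflexive, so we may use the reflexive-transitive closure). -/
def leLR (u w : Equiv.Perm (Fin n)) : Prop :=
  Relation.ReflTransGen (fun a b : Equiv.Perm (Fin n) => leL a b ∨ leR a b) u w

/-- The maximum of the block of the set partition `π(w)` containing the value `v`;
the block of `v` is `{ v' : ε_{w⁻¹ v'}(w) = ε_{w⁻¹ v}(w) }`. -/
def blockMax (w : Equiv.Perm (Fin n)) (v : Fin n) : ℕ :=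
  ((Finset.univ.filter fun v' : Fin n => eps w (w⁻¹ v') = eps w (w⁻¹ v)).max'
      ⟨v, Finset.mem_filter.mpr ⟨Finset.mem_univ v, rfl⟩⟩).val

/-- The fireworks map `Φ`: the one-line word of `Φ w` lists the blocks of `π(w)` in
increasing order of their maxima, each block written in decreasing order.  Equivalently,
`Φ w` sorts the values by the key (max of block, value reversed), lexicographically. -/
def Phi (w : Equiv.Perm (Fin n)) : Equiv.Perm (Fin n) :=
  Tuple.sort fun v : Fin n => n * blockMax w v + (n - 1 - (v : ℕ))

/-- The inverse fireworks map `Φ_inv w = Φ(w⁻¹)⁻¹`. -/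
def PhiInv (w : Equiv.Perm (Fin n)) : Equiv.Perm (Fin n) := (Phi w⁻¹)⁻¹

/-- Partial sums of a sequence of block sizes. -/
def psum (a : ℕ → ℕ) (m : ℕ) : ℕ := ∑ j ∈ Finset.range m, a j

/-- The index of the block (interval `[psum a m, psum a (m+1))`) containing the value `v`. -/
def blockIdx (n : ℕ) (a : ℕ → ℕ) (v : Fin n) : ℕ :=
  ((Finset.range n).filter fun m => psum a (m + 1) ≤ (v : ℕ)).card

/-- The layered permutation with block sizes `a 0, a 1, …`: it reverses each of the
consecutive intervals `[psum a m, psum a (m+1))` of `{0, …, n-1}`.  Equivalently, its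
one-line word sorts the values by (block index, value reversed) lexicographically. -/
def layered (n : ℕ) (a : ℕ → ℕ) : Equiv.Perm (Fin n) :=
  Tuple.sort fun v : Fin n => n * blockIdx n a v + (n - 1 - (v : ℕ))

/-- The layered permutation `e_α` associated to a shape `α : Fin n → ℕ`. -/
def eOf (α : Fin n → ℕ) : Equiv.Perm (Fin n) :=
  layered n fun m => if h : m < n then α ⟨m, h⟩ else 0

/-!
Write `ℓᵢ(w)` for `lisFrom w i` and `mᵢ(v)` for the number of descents of `v` at positions `≥ i`,
so that `raj w = ∑ᵢ (n - i - ℓᵢ(w))` and `maj v = ∑ᵢ mᵢ(v)`. An increasing subsequence starting at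
`i` meets each stretch of consecutive descents followed by a non-descent at most once, hence
`mᵢ(v) + ℓᵢ(v) ≤ n - i` and `maj v ≤ raj v`. Multiplying `v` on the right by an adjacent
transposition at an ascent never increases `∑ᵢ ℓᵢ`, so `raj` is monotone for `≤_R`. Conversely,
undoing a descent `j` of `w` with `ℓⱼ(w) < ℓⱼ₊₁(w)` does not lower `raj`; when no such descent is
left, `mᵢ + ℓᵢ = n - i` for every `i`, so some `v ≤_R w` has `maj v = raj w`. The statement for
`≤_L` follows because `ℓ`, and hence `raj`, is invariant under `w ↦ w⁻¹`.
-/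

open Finset Equiv

structure IsChainFrom (w : Perm (Fin n)) (i : Fin n) (S : Finset (Fin n)) : Prop where
  mem : i ∈ S
  le : ∀ j ∈ S, i ≤ j
  strictMonoOn : StrictMonoOn w S

section Chains

variable {w : Perm (Fin n)} {i k : Fin n} {S T : Finset (Fin n)}

lemma isChainFrom_singleton (w : Perm (Fin n)) (i : Fin n) : IsChainFrom w i {i} :=
  ⟨mem_singleton_self i, by simp, by simp⟩

lemma IsChainFrom.subset (hS : IsChainFrom w i S) (hTS : T ⊆ S) (hk : k ∈ T)
    (hkT : ∀ j ∈ T, k ≤ j) : IsChainFrom w k T :=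
  ⟨hk, hkT, hS.strictMonoOn.mono (coe_subset.2 hTS)⟩

lemma IsChainFrom.card_le_lisFrom (hS : IsChainFrom w i S) : S.card ≤ lisFrom w i :=
  le_sup (f := card) <| mem_filter.2
    ⟨mem_univ S, hS.mem, hS.le, fun _ hj _ hk => hS.strictMonoOn hj hk⟩

lemma exists_isChainFrom_card_eq_lisFrom (w : Perm (Fin n)) (i : Fin n) :
    ∃ S, IsChainFrom w i S ∧ S.card = lisFrom w i := by
  have hi := isChainFrom_singleton w i
  obtain ⟨S, hS, hsup⟩ := exists_mem_eq_sup (univ.filter fun s : Finset (Fin n) =>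
      i ∈ s ∧ (∀ j ∈ s, i ≤ j) ∧ ∀ j ∈ s, ∀ k ∈ s, j < k → w j < w k)
    ⟨{i}, mem_filter.2 ⟨mem_univ _, hi.mem, hi.le, fun _ hj _ hk => hi.strictMonoOn hj hk⟩⟩ card
  obtain ⟨-, hiS, hle, hmono⟩ := mem_filter.1 hS
  exact ⟨S, ⟨hiS, hle, fun _ hj _ hk => hmono _ hj _ hk⟩, hsup.symm⟩

lemma one_le_lisFrom (w : Perm (Fin n)) (i : Fin n) : 1 ≤ lisFrom w i :=
  (isChainFrom_singleton w i).card_le_lisFrom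

lemma lisFrom_le (w : Perm (Fin n)) (i : Fin n) : lisFrom w i ≤ n - i := by
  obtain ⟨S, hS, hcard⟩ := exists_isChainFrom_card_eq_lisFrom w i
  rw [← hcard, ← Fin.card_Ici]
  exact card_le_card fun j hj => mem_Ici.2 (hS.le j hj)

lemma IsChainFrom.card_add_lisFrom_le (hS : IsChainFrom w i S)
    (hk : ∀ j ∈ S, j < k ∧ w j < w k) : S.card + lisFrom w k ≤ lisFrom w i := by
  obtain ⟨T, hT, hcard⟩ := exists_isChainFrom_card_eq_lisFrom w k
  have hST : ∀ a ∈ S, ∀ b ∈ T, a < b ∧ w a < w b := fun a ha b hb =>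
    ⟨(hk a ha).1.trans_le (hT.le b hb),
      (hk a ha).2.trans_le (hT.strictMonoOn.monotoneOn hT.mem hb (hT.le b hb))⟩
  have hchain : IsChainFrom w i (S ∪ T) := by
    refine ⟨mem_union_left _ hS.mem, fun j hj => ?_, fun a ha b hb hab => ?_⟩
    · rcases mem_union.1 hj with hj | hj
      exacts [hS.le j hj, (hST i hS.mem j hj).1.le]
    · rcases mem_union.1 ha with ha | ha <;> rcases mem_union.1 hb with hb | hb
      · exact hS.strictMonoOn ha hb hab
      · exact (hST a ha b hb).2
      · exact absurd hab (hST b hb a ha).1.asymm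
      · exact hT.strictMonoOn ha hb hab
  rw [← hcard, ← card_union_of_disjoint (disjoint_left.2 fun a ha hb => (hST a ha a hb).1.false)]
  exact hchain.card_le_lisFrom

lemma lisFrom_lt_lisFrom (hik : i < k) (hw : w i < w k) : lisFrom w k < lisFrom w i := by
  simpa [Nat.one_add_le_iff] using
    (isChainFrom_singleton w i).card_add_lisFrom_le (k := k) (by simpa using ⟨hik, hw⟩)

end Chains

section Raj

variable {v w : Perm (Fin n)}

lemma rajCode_add_lisFrom (w : Perm (Fin n)) (i : Fin n) : rajCode w i + lisFrom w i = n - i :=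
  Nat.sub_add_cancel (lisFrom_le w i)

lemma raj_add_sum_lisFrom (w : Perm (Fin n)) :
    raj w + ∑ i, lisFrom w i = ∑ i : Fin n, (n - i : ℕ) := by
  rw [raj, ← sum_add_distrib]
  exact sum_congr rfl fun i _ => rajCode_add_lisFrom w i

lemma raj_le_raj_of_sum_lisFrom_le (h : ∑ i, lisFrom w i ≤ ∑ i, lisFrom v i) :
    raj v ≤ raj w := by
  have := raj_add_sum_lisFrom v
  have := raj_add_sum_lisFrom w
  omega

lemma lisFrom_le_lisFrom_inv (w : Perm (Fin n)) (i : Fin n) :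
    lisFrom w i ≤ lisFrom w⁻¹ (w i) := by
  obtain ⟨S, hS, hcard⟩ := exists_isChainFrom_card_eq_lisFrom w i
  rw [← hcard, ← card_image_of_injective S w.injective]
  refine IsChainFrom.card_le_lisFrom ⟨mem_image_of_mem w hS.mem, ?_, ?_⟩
  · simp only [mem_image, forall_exists_index, and_imp, forall_apply_eq_imp_iff₂]
    exact fun j hj => (hS.strictMonoOn.le_iff_le hS.mem hj).2 (hS.le j hj)
  · simp only [coe_image, StrictMonoOn, Set.mem_image, mem_coe, forall_exists_index, and_imp,
      forall_apply_eq_imp_iff₂, Perm.coe_inv, symm_apply_apply]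
    exact fun a ha b hb hab => (hS.strictMonoOn.lt_iff_lt ha hb).1 hab

lemma lisFrom_inv_apply (w : Perm (Fin n)) (i : Fin n) : lisFrom w⁻¹ (w i) = lisFrom w i := by
  refine (lisFrom_le_lisFrom_inv w i).antisymm' ?_
  simpa using lisFrom_le_lisFrom_inv w⁻¹ (w i)

lemma raj_inv (w : Perm (Fin n)) : raj w⁻¹ = raj w := by
  have hsum : ∑ i, lisFrom w⁻¹ i = ∑ i, lisFrom w i := by
    rw [← Equiv.sum_comp w]
    exact sum_congr rfl fun i _ => lisFrom_inv_apply w i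
  have := raj_add_sum_lisFrom w
  have := raj_add_sum_lisFrom w⁻¹
  omega

end Raj

lemma card_eq_card_filter_lt_add_card_filter_gt {α : Type*} [LinearOrder α] {S : Finset α} {a : α}
    (ha : a ∈ S) : S.card = (S.filter (· < a)).card + (S.filter (a < ·)).card + 1 := by
  have hge : S.filter (fun q => ¬ q < a) = insert a (S.filter (a < ·)) := by
    ext q
    simp only [mem_filter, mem_insert, not_lt]
    constructor
    · rintro ⟨hq, haq⟩
      exact haq.eq_or_lt.imp Eq.symm fun h => ⟨hq, h⟩
    · rintro (rfl | ⟨hq, haq⟩)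
      exacts [⟨ha, le_rfl⟩, ⟨hq, haq.le⟩]
  rw [← card_filter_add_card_filter_not (p := (· < a)) (s := S), hge,
    card_insert_of_notMem (by simp), add_assoc]

section AdjacentSwap

variable {w : Perm (Fin n)} {i j j' : Fin n} {S : Finset (Fin n)}

lemma swap_lt_swap_iff (hj : (j : ℕ) + 1 = j') {a b : Fin n} (hab : a < b) :
    swap j j' a < swap j j' b ↔ ¬(a = j ∧ b = j') := by
  rw [Fin.lt_def] at hab
  simp only [swap_apply_def, Fin.lt_def, Fin.ext_iff]
  split_ifs <;> omega

lemma IsChainFrom.card_le_lisFrom_swap (hj : (j : ℕ) + 1 = j')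
    (hS : IsChainFrom (w * swap j j') i S) (hjS : ¬(j ∈ S ∧ j' ∈ S)) :
    S.card ≤ lisFrom w (swap j j' i) := by
  have hmono : StrictMonoOn (swap j j') S := fun a ha b hb hab =>
    (swap_lt_swap_iff hj hab).2 fun ⟨haj, hbj⟩ => hjS ⟨haj ▸ ha, hbj ▸ hb⟩
  rw [← card_image_of_injective S (swap j j').injective]
  refine IsChainFrom.card_le_lisFrom ⟨mem_image_of_mem _ hS.mem, ?_, ?_⟩
  · simp only [mem_image, forall_exists_index, and_imp, forall_apply_eq_imp_iff₂]
    exact fun a ha => (hmono.le_iff_le hS.mem ha).2 (hS.le a ha)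
  · simp only [coe_image, StrictMonoOn, Set.mem_image, mem_coe, forall_exists_index, and_imp,
      forall_apply_eq_imp_iff₂]
    exact fun a ha b hb hab => hS.strictMonoOn ha hb ((hmono.lt_iff_lt ha hb).1 hab)

lemma lisFrom_mul_swap_le_of_lt (hj : (j : ℕ) + 1 = j') (hw : w j < w j') (i : Fin n) :
    lisFrom (w * swap j j') i ≤ lisFrom w (swap j j' i) := by
  obtain ⟨S, hS, hcard⟩ := exists_isChainFrom_card_eq_lisFrom (w * swap j j') i
  refine hcard ▸ hS.card_le_lisFrom_swap hj fun ⟨hjS, hj'S⟩ => ?_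
  have := hS.strictMonoOn hjS hj'S (Fin.lt_def.2 (by omega))
  simp only [Perm.mul_apply, swap_apply_left, swap_apply_right] at this
  exact this.asymm hw

/-- A chain of `w * swap j j'` through both `j` and `j'` splits as `A ∪ {j} ∪ B` with `A` before
`j`. Moved to start at `j`, the part `B` is a chain of `w`, so `#B < lisFrom w j'`; and `A` is a
chain of `w` that continues into a longest chain of `w` from `j'`. -/
lemma lisFrom_mul_swap_le_of_lisFrom_lt (hj : (j : ℕ) + 1 = j')
    (hlis : lisFrom w j < lisFrom w j') (i : Fin n) :
    lisFrom (w * swap j j') i ≤ lisFrom w (swap j j' i) := by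
  obtain ⟨S, hS, hcard⟩ := exists_isChainFrom_card_eq_lisFrom (w * swap j j') i
  rw [← hcard]
  by_cases hjS : ¬(j ∈ S ∧ j' ∈ S)
  · exact hS.card_le_lisFrom_swap hj hjS
  obtain ⟨hjS, hj'S⟩ := not_not.1 hjS
  have hjj' : j < j' := Fin.lt_def.2 (by omega)
  set A := S.filter (· < j)
  set B := S.filter (j < ·)
  have hsplit : S.card = A.card + B.card + 1 := card_eq_card_filter_lt_add_card_filter_gt hjS
  have hB : B.card + 1 ≤ lisFrom w j' := by
    have hBchain : IsChainFrom (w * swap j j') j' B :=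
      hS.subset (filter_subset _ _) (mem_filter.2 ⟨hj'S, hjj'⟩)
        fun q hq => Fin.le_def.2 (by have := Fin.lt_def.1 (mem_filter.1 hq).2; omega)
    have := hBchain.card_le_lisFrom_swap hj (fun h => by simpa [B] using h.1)
    rw [swap_apply_right] at this
    omega
  rcases (hS.le j hjS).eq_or_lt with rfl | hij
  · have hA : A = ∅ := filter_eq_empty_iff.2 fun q hq => not_lt.2 (hS.le q hq)
    simp only [hA, card_empty, swap_apply_left] at hsplit ⊢
    omega
  · have hfix : ∀ q ∈ A, swap j j' q = q := fun q hq =>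
      swap_apply_of_ne_of_ne (mem_filter.1 hq).2.ne ((mem_filter.1 hq).2.trans hjj').ne
    have hAchain : IsChainFrom w i A := by
      refine ⟨mem_filter.2 ⟨hS.mem, hij⟩, fun q hq => hS.le q (mem_filter.1 hq).1, ?_⟩
      refine (hS.strictMonoOn.mono (coe_subset.2 (filter_subset _ S))).congr fun q hq => ?_
      simp [hfix q hq]
    have hA := hAchain.card_add_lisFrom_le (k := j') fun q hq => by
      have hqj := (mem_filter.1 hq).2
      refine ⟨hqj.trans hjj', ?_⟩
      simpa [hfix q hq] using hS.strictMonoOn (mem_filter.1 hq).1 hjS hqj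
    rw [swap_apply_of_ne_of_ne hij.ne (hij.trans hjj').ne]
    omega

lemma raj_le_raj_mul_swap (hlis : ∀ i, lisFrom (w * swap j j') i ≤ lisFrom w (swap j j' i)) :
    raj w ≤ raj (w * swap j j') :=
  raj_le_raj_of_sum_lisFrom_le <| (sum_le_sum fun i _ => hlis i).trans_eq (Equiv.sum_comp _ _)

end AdjacentSwap

section Inversions

def inversions (w : Perm (Fin n)) : Finset (Fin n × Fin n) :=
  univ.filter fun p => p.1 < p.2 ∧ w p.2 < w p.1

variable {u v w : Perm (Fin n)} {j j' : Fin n}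

@[simp]
lemma mem_inversions {p : Fin n × Fin n} : p ∈ inversions w ↔ p.1 < p.2 ∧ w p.2 < w p.1 := by
  simp [inversions]

lemma card_inversions (w : Perm (Fin n)) : (inversions w).card = invNum w := rfl

lemma invNum_one : invNum (1 : Perm (Fin n)) = 0 := by
  simp only [← card_inversions, card_eq_zero, eq_empty_iff_forall_notMem, mem_inversions,
    Perm.one_apply]
  exact fun p h => h.1.asymm h.2

lemma invNum_inv (w : Perm (Fin n)) : invNum w⁻¹ = invNum w := by
  simp only [← card_inversions]
  refine card_nbij' (fun p => (w⁻¹ p.2, w⁻¹ p.1)) (fun p => (w p.2, w p.1)) ?_ ?_ ?_ ?_ <;>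
    simp +contextual [Set.MapsTo, Set.LeftInvOn]

lemma invNum_mul_le (u v : Perm (Fin n)) : invNum (u * v) ≤ invNum u + invNum v := by
  simp only [← card_inversions]
  calc (inversions (u * v)).card
      ≤ ((inversions u).image (Prod.map ⇑v⁻¹ ⇑v⁻¹) ∪ inversions v).card := by
        refine card_le_card fun p hp => ?_
        rw [mem_inversions, Perm.mul_apply, Perm.mul_apply] at hp
        rcases lt_or_gt_of_ne (v.injective.ne hp.1.ne) with hv | hv
        · exact mem_union_left _ (mem_image.2 ⟨(v p.1, v p.2), by simpa using ⟨hv, hp.2⟩,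
            by simp⟩)
        · exact mem_union_right _ (mem_inversions.2 ⟨hp.1, hv⟩)
    _ ≤ _ := (card_union_le _ _).trans (Nat.add_le_add_right card_image_le _)

/-- Right multiplication by `swap j j'` relabels the inversions of `w` and adds `(j, j')`. -/
lemma invNum_mul_swap_of_lt (hj : (j : ℕ) + 1 = j') (hw : w j < w j') :
    invNum (w * swap j j') = invNum w + 1 := by
  have hjj' : j < j' := Fin.lt_def.2 (by omega)
  have hmem : (j, j') ∈ inversions (w * swap j j') := by simpa using ⟨hjj', hw⟩
  simp only [← card_inversions, ← card_erase_add_one hmem]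
  congr 1
  let s : Fin n × Fin n → Fin n × Fin n := Prod.map (swap j j') (swap j j')
  have hs : ∀ p, s (s p) = p := fun p => Prod.ext (swap_apply_self _ _ _) (swap_apply_self _ _ _)
  refine card_nbij' s s (fun p hp => ?_) (fun p hp => ?_) (fun p _ => hs p) (fun p _ => hs p)
  · obtain ⟨hne, hp⟩ := mem_erase.1 hp
    rw [mem_inversions, Perm.mul_apply, Perm.mul_apply] at hp
    refine mem_inversions.2 ⟨(swap_lt_swap_iff hj hp.1).2 fun ⟨h1, h2⟩ => hne ?_, hp.2⟩
    exact Prod.ext h1 h2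
  · rw [mem_coe, mem_inversions] at hp
    refine mem_erase.2 ⟨fun h => ?_, mem_inversions.2 ⟨?_, by simpa [s] using hp.2⟩⟩
    · simp only [s, Prod.map, Prod.mk.injEq, swap_apply_eq_iff, swap_apply_left,
        swap_apply_right] at h
      exact hjj'.asymm (h.1 ▸ h.2 ▸ hp.1)
    · exact (swap_lt_swap_iff hj hp.1).2 fun ⟨h1, h2⟩ => (h1 ▸ h2 ▸ hp.2).asymm hw

lemma invNum_mul_swap_of_gt (hj : (j : ℕ) + 1 = j') (hw : w j' < w j) :
    invNum w = invNum (w * swap j j') + 1 := by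
  simpa [mul_assoc] using invNum_mul_swap_of_lt hj (w := w * swap j j') (by simpa using hw)

lemma invNum_swap (hj : (j : ℕ) + 1 = j') : invNum (swap j j') = 1 := by
  simpa [invNum_one] using invNum_mul_swap_of_lt hj (w := 1)
    (by simpa using Fin.lt_def.2 (by omega))

lemma exists_descent_of_ne_one (hw : w ≠ 1) :
    ∃ j j' : Fin n, (j : ℕ) + 1 = j' ∧ w j' < w j := by
  by_contra! hasc
  refine hw (Equiv.ext fun i => StrictMono.apply_eq ?_)
  cases n with
  | zero => exact fun a => a.elim0
  | succ m =>
    refine Fin.strictMono_iff_lt_succ.2 fun i => (hasc _ _ (by simp)).lt_of_ne ?_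
    simp [Fin.ext_iff]

end Inversions

section MajorIndex

variable {w : Perm (Fin n)} {i j j' p q : Fin n}

lemma mem_descents_iff (hj : (j : ℕ) + 1 = j') : j ∈ descents w ↔ w j' < w j := by
  have hj' : (⟨j + 1, hj ▸ j'.isLt⟩ : Fin n) = j' := Fin.ext hj
  simp [descents, hj ▸ j'.isLt, hj']

lemma add_one_lt_of_mem_descents (h : j ∈ descents w) : (j : ℕ) + 1 < n := by
  by_contra hj
  simp [descents, hj] at h

lemma maj_eq_sum_mCode (w : Perm (Fin n)) : maj w = ∑ i, mCode w i := by
  simp only [maj, mCode, card_filter]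
  rw [sum_comm]
  refine sum_congr rfl fun q _ => ?_
  rw [← card_filter, ← Fin.card_Iic]
  congr 1
  ext
  simp

lemma mCode_eq_mCode_add (hj : (j : ℕ) + 1 = j') :
    mCode w j = mCode w j' + if j ∈ descents w then 1 else 0 := by
  simp only [mCode, card_filter]
  rw [← sum_ite_eq' (descents w) j fun _ => 1, ← sum_add_distrib]
  refine sum_congr rfl fun q _ => ?_
  simp only [Fin.le_def, Fin.ext_iff]
  split_ifs <;> omega

lemma apply_lt_apply_of_Ico_subset_descents (hpq : p < q) (h : Ico p q ⊆ descents w) :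
    w q < w p := by
  obtain ⟨q, hq⟩ := q
  induction q with
  | zero => exact absurd (Fin.lt_def.1 hpq) (Nat.not_lt_zero _)
  | succ q ih =>
    have hq' : q < n := by omega
    have hpq' : (p : ℕ) ≤ q := Nat.lt_succ_iff.1 hpq
    have hdesc := (mem_descents_iff (w := w) (j := ⟨q, hq'⟩) (j' := ⟨q + 1, hq⟩) rfl).1
      (h (mem_Ico.2 ⟨hpq', Nat.lt_succ_self q⟩))
    rcases (hpq' : p ≤ ⟨q, hq'⟩).eq_or_lt with rfl | hp
    · exact hdesc
    · exact hdesc.trans (ih hq' hp ((Ico_subset_Ico_right (Fin.le_def.2 (by simp))).trans h))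

/-- `ρ p`, the first non-descent at or after `p`, is injective on an increasing chain: between
two chain positions with the same `ρ` there would be only descents. -/
lemma lisFrom_le_card_filter_notMem_descents (w : Perm (Fin n)) (i : Fin n) :
    lisFrom w i ≤ ((Ici i).filter (· ∉ descents w)).card := by
  have hne : ∀ p : Fin n, ((Ici p).filter (· ∉ descents w)).Nonempty := fun p => by
    have := p.isLt
    refine ⟨⟨n - 1, by omega⟩, mem_filter.2 ⟨mem_Ici.2 (Fin.le_def.2 ?_), fun h => ?_⟩⟩
    · simp only; omega
    · have := add_one_lt_of_mem_descents h
      simp only at this; omega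
  let ρ p := ((Ici p).filter (· ∉ descents w)).min' (hne p)
  have hρ : ∀ p, p ≤ ρ p ∧ ρ p ∉ descents w := fun p =>
    have h := mem_filter.1 (min'_mem _ (hne p))
    ⟨mem_Ici.1 h.1, h.2⟩
  have hρmin : ∀ p, Ico p (ρ p) ⊆ descents w := fun p q hq => by
    by_contra hqD
    obtain ⟨hpq, hqρ⟩ := mem_Ico.1 hq
    exact (min'_le _ q (mem_filter.2 ⟨mem_Ici.2 hpq, hqD⟩)).not_gt hqρ
  have hρinj : ∀ p q, p < q → ρ p = ρ q → w q < w p := fun p q hpq hρpq =>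
    apply_lt_apply_of_Ico_subset_descents hpq
      ((Ico_subset_Ico_right (hρpq ▸ (hρ q).1)).trans (hρmin p))
  obtain ⟨S, hS, hcard⟩ := exists_isChainFrom_card_eq_lisFrom w i
  rw [← hcard]
  refine card_le_card_of_injOn ρ (fun p hp => ?_) fun p hp q hq hpq => ?_
  · exact mem_filter.2 ⟨mem_Ici.2 ((hS.le p hp).trans (hρ p).1), (hρ p).2⟩
  · by_contra hne
    rcases lt_or_gt_of_ne hne with h | h
    · exact (hρinj p q h hpq).not_gt (hS.strictMonoOn hp hq h)
    · exact (hρinj q p h hpq.symm).not_gt (hS.strictMonoOn hq hp h)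

lemma mCode_add_lisFrom_le (w : Perm (Fin n)) (i : Fin n) : mCode w i + lisFrom w i ≤ n - i := by
  have hsplit : mCode w i + ((Ici i).filter (· ∉ descents w)).card = n - i := by
    rw [← Fin.card_Ici, ← card_filter_add_card_filter_not (s := Ici i) (p := (· ∈ descents w)),
      mCode]
    congr 2
    ext
    simp [and_comm]
  have := lisFrom_le_card_filter_notMem_descents w i
  omega

lemma maj_le_raj (w : Perm (Fin n)) : maj w ≤ raj w := by
  rw [maj_eq_sum_mCode, raj]
  refine sum_le_sum fun i _ => ?_
  have := mCode_add_lisFrom_le w i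
  have := rajCode_add_lisFrom w i
  omega

/-- Going right to left, `mCode + lisFrom` gains one at every position: at an ascent `lisFrom`
grows, at a descent `mCode` does and by hypothesis `lisFrom` does not drop. -/
lemma sub_le_mCode_add_lisFrom
    (hw : ∀ j j' : Fin n, (j : ℕ) + 1 = j' → w j' < w j → lisFrom w j' ≤ lisFrom w j)
    (i : Fin n) : n - i ≤ mCode w i + lisFrom w i := by
  by_cases hi : (i : ℕ) + 1 < n
  · have hii : (i : ℕ) + 1 = (⟨i + 1, hi⟩ : Fin n) := rfl
    have ih := sub_le_mCode_add_lisFrom hw ⟨i + 1, hi⟩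
    rw [mCode_eq_mCode_add hii]
    split_ifs with hd
    · have := hw _ _ hii ((mem_descents_iff hii).1 hd)
      simp only at ih
      omega
    · have hlt : w i < w ⟨i + 1, hi⟩ :=
        (not_lt.1 (hd ∘ (mem_descents_iff hii).2)).lt_of_ne (w.injective.ne (by simp [Fin.ext_iff]))
      have := lisFrom_lt_lisFrom (Fin.lt_def.2 (by simp)) hlt
      simp only at ih
      omega
  · have := one_le_lisFrom w i
    omega
termination_by n - i

end MajorIndex

section WeakOrder

variable {u v w : Perm (Fin n)} {j j' : Fin n}

lemma leR_refl (w : Perm (Fin n)) : leR w w :=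
  ⟨1, (mul_one w).symm, by rw [invNum_one, add_zero]⟩

lemma leR_trans (huv : leR u v) (hvw : leR v w) : leR u w := by
  obtain ⟨x, rfl, hx⟩ := huv
  obtain ⟨y, rfl, hy⟩ := hvw
  refine ⟨x * y, mul_assoc u x y, ?_⟩
  have := invNum_mul_le x y
  have := invNum_mul_le u (x * y)
  rw [← mul_assoc] at this
  omega

lemma leR_mul_swap (hj : (j : ℕ) + 1 = j') (hw : w j' < w j) : leR (w * swap j j') w :=
  ⟨swap j j', by rw [mul_assoc, swap_mul_self, mul_one], by
    rw [invNum_swap hj]; exact invNum_mul_swap_of_gt hj hw⟩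

lemma leL_iff_leR_inv : leL u w ↔ leR u⁻¹ w⁻¹ := by
  constructor
  · rintro ⟨x, rfl, hx⟩
    exact ⟨x⁻¹, mul_inv_rev x u, by simp only [invNum_inv]; omega⟩
  · rintro ⟨x, hx, hinv⟩
    refine ⟨x⁻¹, by rw [← inv_inj, hx, mul_inv_rev, inv_inv], ?_⟩
    rw [invNum_inv, invNum_inv] at hinv
    rw [hinv, invNum_inv]
    omega

lemma exists_descent_of_leR_of_ne (hvw : leR v w) (hne : v ≠ w) :
    ∃ j j' : Fin n, (j : ℕ) + 1 = j' ∧ w j' < w j ∧ leR v (w * swap j j') := by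
  obtain ⟨u, rfl, hinv⟩ := hvw
  obtain ⟨j, j', hj, hu⟩ := exists_descent_of_ne_one (w := u) fun h => hne (by rw [h, mul_one])
  have hu' := invNum_mul_swap_of_gt hj hu
  have hsub := invNum_mul_le v (u * swap j j')
  rw [← mul_assoc] at hsub
  have hdesc : (v * u) j' < (v * u) j := by
    refine (lt_or_gt_of_ne ((v * u).injective.ne fun h => ?_)).resolve_right fun hasc => ?_
    · simp [Fin.ext_iff] at h; omega
    · have := invNum_mul_swap_of_lt hj hasc; omega
  have := invNum_mul_swap_of_gt hj hdesc
  exact ⟨j, j', hj, hdesc, u * swap j j', by rw [mul_assoc], by omega⟩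

lemma raj_le_raj_of_leR (hvw : leR v w) : raj v ≤ raj w := by
  induction hN : invNum w using Nat.strong_induction_on generalizing w with
  | _ N ih =>
    by_cases hne : v = w
    · rw [hne]
    obtain ⟨j, j', hj, hw, hv⟩ := exists_descent_of_leR_of_ne hvw hne
    have hasc : (w * swap j j') j < (w * swap j j') j' := by simpa using hw
    calc raj v ≤ raj (w * swap j j') :=
          ih _ (by have := invNum_mul_swap_of_gt hj hw; omega) hv rfl
      _ ≤ raj (w * swap j j' * swap j j') :=
          raj_le_raj_mul_swap (lisFrom_mul_swap_le_of_lt hj hasc)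
      _ = raj w := by rw [mul_assoc, swap_mul_self, mul_one]

lemma maj_le_raj_of_leR (hvw : leR v w) : maj v ≤ raj w :=
  (maj_le_raj v).trans (raj_le_raj_of_leR hvw)

lemma exists_leR_raj_le_maj (w : Perm (Fin n)) : ∃ v, leR v w ∧ raj w ≤ maj v := by
  induction hN : invNum w using Nat.strong_induction_on generalizing w with
  | _ N ih =>
    by_cases hgood : ∃ j j' : Fin n, (j : ℕ) + 1 = j' ∧ w j' < w j ∧ lisFrom w j < lisFrom w j'
    · obtain ⟨j, j', hj, hw, hlis⟩ := hgood
      obtain ⟨v, hv, hraj⟩ :=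
        ih _ (by have := invNum_mul_swap_of_gt hj hw; omega) (w * swap j j') rfl
      exact ⟨v, leR_trans hv (leR_mul_swap hj hw),
        (raj_le_raj_mul_swap (lisFrom_mul_swap_le_of_lisFrom_lt hj hlis)).trans hraj⟩
    · push Not at hgood
      refine ⟨w, leR_refl w, ?_⟩
      rw [maj_eq_sum_mCode, raj]
      refine sum_le_sum fun i _ => ?_
      have := sub_le_mCode_add_lisFrom (fun j j' hj hw => hgood j j' hj hw) i
      have := rajCode_add_lisFrom w i
      omega

end WeakOrder

/-- `raj(w) = max{ maj(v) : v ≤_R w } = max{ maj(u⁻¹) : u ≤_L w }`. -/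
theorem raj_eq_max_maj (n : ℕ) (w : Equiv.Perm (Fin n)) :
    ((∃ v : Equiv.Perm (Fin n), leR v w ∧ maj v = raj w) ∧
      ∀ v : Equiv.Perm (Fin n), leR v w → maj v ≤ raj w) ∧
    ((∃ u : Equiv.Perm (Fin n), leL u w ∧ maj u⁻¹ = raj w) ∧
      ∀ u : Equiv.Perm (Fin n), leL u w → maj u⁻¹ ≤ raj w) := by
  have hR : ∀ w : Perm (Fin n),
      (∃ v, leR v w ∧ maj v = raj w) ∧ ∀ v, leR v w → maj v ≤ raj w := fun w => by
    obtain ⟨v, hv, hraj⟩ := exists_leR_raj_le_maj w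
    exact ⟨⟨v, hv, (maj_le_raj_of_leR hv).antisymm hraj⟩, fun v hv => maj_le_raj_of_leR hv⟩
  obtain ⟨⟨v, hv, hmaj⟩, hmax⟩ := hR w⁻¹
  rw [raj_inv] at hmaj hmax
  refine ⟨hR w, ⟨v⁻¹, leL_iff_leR_inv.2 (by rwa [inv_inv]), by rwa [inv_inv]⟩,
    fun u hu => hmax _ (leL_iff_leR_inv.1 hu)⟩

end RajRegularity
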